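/- Let T > 0 and let G : ℝ^N → [0,∞) be a G-function. Let V : [-T,T]×ℝ^N → ℝ be continuous, and assume there exist a ∈ L¹([-T,T],ℝ), b > 1 and ρ₀ > 0 such that V(t,x) ≥ b·G(x) − a(t) whenever |x| ≤ ρ₀. Let f : [-T,T] → ℝ^N be measurable with R_{G*}(f) < ∞. Let C∞ > 0 be a constant such that ess sup_{t∈[-T,T]} |u(t)| ≤ C∞‖u‖_W for every u ∈ W¹_T L^G, set ρ = ρ₀/C∞, and assume ρ ≥ 2 and R_{G*}(f) + ∫_{-T}^{T} a(t) dt < min{1, b−1}·(ρ/2). Define J(u) = ∫_{-T}^{T} [G(u̇(t)) + V(t,u(t)) + ⟨f(t),u(t)⟩] dt. Then there exists α > 0 such that J(u) ≥ α for every u ∈ W¹_T L^G with ‖u‖_W = ρ. -/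

import Mathlib

open MeasureTheory Set Filter
open scoped RealInnerProductSpace

noncomputable section

/-- G-function -/
def IsGFun {N : ℕ} (G : EuclideanSpace ℝ (Fin N) → ℝ) : Prop :=
  ContDiff ℝ 1 G ∧ ConvexOn ℝ Set.univ G ∧ (∀ x, G (-x) = G x) ∧ G 0 = 0 ∧
    (∀ x, 0 ≤ G x) ∧
    Filter.Tendsto (fun x => G x / ‖x‖) (Filter.cocompact (EuclideanSpace ℝ (Fin N)))
      Filter.atTop

def Delta2Global {N : ℕ} (G : EuclideanSpace ℝ (Fin N) → ℝ) : Prop :=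
  ∃ K₁ : ℝ, 2 < K₁ ∧ ∀ x, G ((2 : ℝ) • x) ≤ K₁ * G x

def Nabla2Global {N : ℕ} (G : EuclideanSpace ℝ (Fin N) → ℝ) : Prop :=
  ∃ K₂ : ℝ, 1 < K₂ ∧ ∀ x, G x ≤ (1 / (2 * K₂)) * G (K₂ • x)

def Delta2 {N : ℕ} (G : EuclideanSpace ℝ (Fin N) → ℝ) : Prop :=
  ∃ K₁ : ℝ, 2 < K₁ ∧ ∃ M₁ : ℝ, 0 ≤ M₁ ∧ ∀ x, M₁ ≤ ‖x‖ → G ((2 : ℝ) • x) ≤ K₁ * G x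

def Nabla2 {N : ℕ} (G : EuclideanSpace ℝ (Fin N) → ℝ) : Prop :=
  ∃ K₂ : ℝ, 1 < K₂ ∧ ∃ M₂ : ℝ, 0 ≤ M₂ ∧ ∀ x, M₂ ≤ ‖x‖ → G x ≤ (1 / (2 * K₂)) * G (K₂ • x)

/-- modular -/
def modular {N : ℕ} (T : ℝ) (G : EuclideanSpace ℝ (Fin N) → ℝ)
    (u : ℝ → EuclideanSpace ℝ (Fin N)) : ℝ :=
  ∫ t in (-T)..T, G (u t)

/-- membership in the Orlicz space L^G on [-T,T] -/
def MemLG {N : ℕ} (T : ℝ) (G : EuclideanSpace ℝ (Fin N) → ℝ)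
    (u : ℝ → EuclideanSpace ℝ (Fin N)) : Prop :=
  AEStronglyMeasurable u (volume.restrict (Set.Icc (-T) T)) ∧
    IntegrableOn (fun t => G (u t)) (Set.Icc (-T) T)

/-- Luxemburg norm -/
def luxNorm {N : ℕ} (T : ℝ) (G : EuclideanSpace ℝ (Fin N) → ℝ)
    (u : ℝ → EuclideanSpace ℝ (Fin N)) : ℝ :=
  sInf {l : ℝ | 0 < l ∧ ∫ t in (-T)..T, G (l⁻¹ • u t) ≤ 1}

/-- membership in the periodic Orlicz–Sobolev space W¹_T L^G :
`u` is absolutely continuous with derivative `u'`, both in `L^G`, and `u(-T) = u(T)`. -/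
def MemW {N : ℕ} (T : ℝ) (G : EuclideanSpace ℝ (Fin N) → ℝ)
    (u u' : ℝ → EuclideanSpace ℝ (Fin N)) : Prop :=
  (∀ t ∈ Set.Icc (-T) T, u t = u (-T) + ∫ s in (-T)..t, u' s) ∧
    IntegrableOn u' (Set.Icc (-T) T) ∧ MemLG T G u ∧ MemLG T G u' ∧ u (-T) = u T

/-- Sobolev norm ‖u‖_W = ‖u‖_G + ‖u̇‖_G -/
def WNorm {N : ℕ} (T : ℝ) (G : EuclideanSpace ℝ (Fin N) → ℝ)
    (u u' : ℝ → EuclideanSpace ℝ (Fin N)) : ℝ :=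
  luxNorm T G u + luxNorm T G u'

/-- Simonenko lower index p_G -/
def simonP {N : ℕ} (G : EuclideanSpace ℝ (Fin N) → ℝ) : ℝ :=
  sInf {r : ℝ | ∃ x, x ≠ 0 ∧ r = ⟪x, gradient G x⟫ / G x}

/-- Simonenko upper index q_G -/
def simonQ {N : ℕ} (G : EuclideanSpace ℝ (Fin N) → ℝ) : ℝ :=
  sSup {r : ℝ | ∃ x, x ≠ 0 ∧ r = ⟪x, gradient G x⟫ / G x}

/-- the index q_G^∞ = limsup_{|x|→∞} ⟨x,∇G(x)⟩/G(x) -/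
def simonQInf {N : ℕ} (G : EuclideanSpace ℝ (Fin N) → ℝ) : ℝ :=
  Filter.limsup (fun x => ⟪x, gradient G x⟫ / G x)
    (Filter.cocompact (EuclideanSpace ℝ (Fin N)))

/-- Fenchel conjugate -/
def fenchel {N : ℕ} (G : EuclideanSpace ℝ (Fin N) → ℝ)
    (y : EuclideanSpace ℝ (Fin N)) : ℝ :=
  sSup {r : ℝ | ∃ x, r = ⟪x, y⟫ - G x}

/-!
On the sphere `‖u‖_W = ρ` the embedding gives `‖u‖_∞ ≤ ρ₀`, so the growth condition on `V`
applies pointwise; with the Fenchel–Young inequality `|⟨f, u⟩| ≤ G*(f) + G(u)` (`G` is even) the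
action is at least `∫ G(u̇) + (b - 1) ∫ G(u) - ∫ a - R_{G*}(f)`. As `‖u‖_G + ‖u̇‖_G = ρ ≥ 2`, one
of the two Luxemburg norms is at least `ρ / 2 ≥ 1`, and a Luxemburg norm `≥ c ≥ 1` forces the
modular to be `≥ c`: by convexity `‖v‖_G ≤ max 1 (∫ G(v))`, and when `∫ G(v) < 1` some dilation
`(1 + θ) • v` still has modular `≤ 1`. The dilation needs `G ∘ (2 • v)` integrable, which holds
for the continuous `u` but not for `u̇`; for `u̇` the strict inequality `ρ / 2 < ‖u̇‖_G` of the
case split suffices.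
-/

lemma ConvexOn.map_smul_le_mul {E : Type*} [AddCommGroup E] [Module ℝ E] {g : E → ℝ}
    (hg : ConvexOn ℝ univ g) (hg0 : g 0 = 0) {t : ℝ} (ht0 : 0 ≤ t) (ht1 : t ≤ 1) (x : E) :
    g (t • x) ≤ t * g x := by
  simpa [hg0] using hg.2 (mem_univ x) (mem_univ 0) ht0 (sub_nonneg.2 ht1) (add_sub_cancel t 1)

lemma ConvexOn.map_one_add_smul_le {E : Type*} [AddCommGroup E] [Module ℝ E] {g : E → ℝ}
    (hg : ConvexOn ℝ univ g) {θ : ℝ} (hθ0 : 0 ≤ θ) (hθ1 : θ ≤ 1) (x : E) :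
    g ((1 + θ) • x) ≤ (1 - θ) * g x + θ * g ((2 : ℝ) • x) := by
  have hx : (1 - θ) • x + θ • (2 : ℝ) • x = (1 + θ) • x := by
    rw [smul_smul, ← add_smul]; ring_nf
  simpa only [hx, smul_eq_mul] using
    hg.2 (mem_univ x) (mem_univ ((2 : ℝ) • x)) (sub_nonneg.2 hθ1) hθ0 (sub_add_cancel 1 θ)

lemma MeasureTheory.IntegrableOn.intervalIntegrable_of_le {E : Type*} [NormedAddCommGroup E]
    {f : ℝ → E} {a b : ℝ} (hab : a ≤ b) (hf : IntegrableOn f (Icc a b)) :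
    IntervalIntegrable f volume a b :=
  (intervalIntegrable_iff_integrableOn_Ioc_of_le hab).2 (hf.mono_set Ioc_subset_Icc_self)

namespace IsGFun

variable {N : ℕ} {G : EuclideanSpace ℝ (Fin N) → ℝ}

lemma continuous (hG : IsGFun G) : Continuous G := hG.1.continuous

lemma convexOn (hG : IsGFun G) : ConvexOn ℝ univ G := hG.2.1

lemma even (hG : IsGFun G) (x : EuclideanSpace ℝ (Fin N)) : G (-x) = G x := hG.2.2.1 x

lemma apply_zero (hG : IsGFun G) : G 0 = 0 := hG.2.2.2.1

lemma nonneg (hG : IsGFun G) (x : EuclideanSpace ℝ (Fin N)) : 0 ≤ G x := hG.2.2.2.2.1 x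

lemma tendsto_sub_inner_cocompact (hG : IsGFun G) (y : EuclideanSpace ℝ (Fin N)) :
    Tendsto (fun x => G x - ⟪x, y⟫) (cocompact _) atTop := by
  refine tendsto_atTop_mono' _ ?_ tendsto_norm_cocompact_atTop
  filter_upwards [hG.2.2.2.2.2.eventually_ge_atTop (‖y‖ + 1)] with x hx
  have hx0 : 0 < ‖x‖ := by
    refine (norm_nonneg x).lt_of_ne fun h => ?_
    rw [← h, div_zero] at hx
    linarith [norm_nonneg y]
  nlinarith [(le_div_iff₀ hx0).1 hx, real_inner_le_norm x y]

lemma inner_sub_le_fenchel (hG : IsGFun G) (x y : EuclideanSpace ℝ (Fin N)) :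
    ⟪x, y⟫ - G x ≤ fenchel G y := by
  obtain ⟨x₀, hx₀⟩ := Continuous.exists_forall_le (f := fun x => G x - ⟪x, y⟫)
    (hG.continuous.sub (continuous_id.inner continuous_const)) (hG.tendsto_sub_inner_cocompact y)
  refine le_csSup ⟨⟪x₀, y⟫ - G x₀, ?_⟩ ⟨x, rfl⟩
  rintro _ ⟨z, rfl⟩
  linarith [hx₀ z]

lemma abs_inner_le_fenchel_add (hG : IsGFun G) (x y : EuclideanSpace ℝ (Fin N)) :
    |⟪y, x⟫| ≤ fenchel G y + G x := by
  have h₁ := hG.inner_sub_le_fenchel x y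
  have h₂ := hG.inner_sub_le_fenchel (-x) y
  rw [inner_neg_left, hG.even] at h₂
  rw [real_inner_comm, abs_le]
  constructor <;> linarith

end IsGFun

section Orlicz

variable {N : ℕ} {G : EuclideanSpace ℝ (Fin N) → ℝ} {T : ℝ} {v : ℝ → EuclideanSpace ℝ (Fin N)}

lemma modular_nonneg (hT : 0 ≤ T) (hG : IsGFun G) (v : ℝ → EuclideanSpace ℝ (Fin N)) :
    0 ≤ modular T G v :=
  intervalIntegral.integral_nonneg (by linarith) fun t _ => hG.nonneg _

lemma luxNorm_le_of_integral_le_one {l : ℝ} (hl : 0 < l)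
    (h : ∫ t in (-T)..T, G (l⁻¹ • v t) ≤ 1) : luxNorm T G v ≤ l :=
  csInf_le ⟨0, fun _ hx => hx.1.le⟩ ⟨hl, h⟩

lemma integrableOn_comp_smul_of_le (hG : IsGFun G)
    (hv : AEStronglyMeasurable v (volume.restrict (Icc (-T) T))) {c : ℝ} {g : ℝ → ℝ}
    (hg : IntegrableOn g (Icc (-T) T)) (hle : ∀ t, G (c • v t) ≤ g t) :
    IntegrableOn (fun t => G (c • v t)) (Icc (-T) T) :=
  hg.mono' (hG.continuous.comp_aestronglyMeasurable (hv.const_smul c))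
    (ae_of_all _ fun t => by rw [Real.norm_of_nonneg (hG.nonneg _)]; exact hle t)

lemma luxNorm_le_of_modular_le (hT : 0 ≤ T) (hG : IsGFun G) (hv : MemLG T G v) {c : ℝ}
    (hc : 1 ≤ c) (hm : modular T G v ≤ c) : luxNorm T G v ≤ c := by
  have hc0 : 0 < c := by linarith
  have hle : ∀ t, G (c⁻¹ • v t) ≤ c⁻¹ * G (v t) := fun t =>
    hG.convexOn.map_smul_le_mul hG.apply_zero (inv_nonneg.2 hc0.le) (inv_le_one_of_one_le₀ hc) _
  have hint := hv.2.const_mul c⁻¹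
  refine luxNorm_le_of_integral_le_one hc0 ?_
  calc ∫ t in (-T)..T, G (c⁻¹ • v t) ≤ ∫ t in (-T)..T, c⁻¹ * G (v t) :=
        intervalIntegral.integral_mono_on (by linarith)
          (IntegrableOn.intervalIntegrable_of_le (by linarith)
            (integrableOn_comp_smul_of_le hG hv.1 hint hle))
          (IntegrableOn.intervalIntegrable_of_le (by linarith) hint) fun t _ => hle t
    _ = c⁻¹ * modular T G v := intervalIntegral.integral_const_mul _ _
    _ ≤ 1 := by rw [inv_mul_le_iff₀ hc0]; linarith

lemma luxNorm_lt_one_of_modular_lt_one (hT : 0 ≤ T) (hG : IsGFun G) (hv : MemLG T G v)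
    (h2v : IntegrableOn (fun t => G ((2 : ℝ) • v t)) (Icc (-T) T)) (hm : modular T G v < 1) :
    luxNorm T G v < 1 := by
  set m := modular T G v
  set M := ∫ t in (-T)..T, G ((2 : ℝ) • v t)
  have hm0 : 0 ≤ m := modular_nonneg hT hG v
  have hM0 : 0 ≤ M := intervalIntegral.integral_nonneg (by linarith) fun t _ => hG.nonneg _
  set θ := min 1 ((1 - m) / (M + 1))
  have hθ0 : 0 < θ := lt_min one_pos (div_pos (by linarith) (by linarith))
  have hθ1 : θ ≤ 1 := min_le_left _ _
  have hθM : θ * (M + 1) ≤ 1 - m := (le_div_iff₀ (by linarith)).1 (min_le_right _ _)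
  have hle : ∀ t, G ((1 + θ) • v t) ≤ (1 - θ) * G (v t) + θ * G ((2 : ℝ) • v t) := fun t =>
    hG.convexOn.map_one_add_smul_le hθ0.le hθ1 _
  have hint₁ := IntegrableOn.intervalIntegrable_of_le (by linarith) (hv.2.const_mul (1 - θ))
  have hint₂ := IntegrableOn.intervalIntegrable_of_le (by linarith) (h2v.const_mul θ)
  have hdil : ∫ t in (-T)..T, G ((1 + θ) • v t) ≤ 1 :=
    calc ∫ t in (-T)..T, G ((1 + θ) • v t)
        ≤ ∫ t in (-T)..T, ((1 - θ) * G (v t) + θ * G ((2 : ℝ) • v t)) :=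
          intervalIntegral.integral_mono_on (by linarith)
            (IntegrableOn.intervalIntegrable_of_le (by linarith)
              (integrableOn_comp_smul_of_le hG hv.1 ((hv.2.const_mul _).add (h2v.const_mul _)) hle))
            (hint₁.add hint₂) fun t _ => hle t
      _ = (1 - θ) * m + θ * M := by
          rw [intervalIntegral.integral_add hint₁ hint₂, intervalIntegral.integral_const_mul,
            intervalIntegral.integral_const_mul]
          rfl
      _ ≤ 1 := by nlinarith
  calc luxNorm T G v ≤ (1 + θ)⁻¹ :=
        luxNorm_le_of_integral_le_one (by positivity) (by rwa [inv_inv])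
    _ < 1 := inv_lt_one_of_one_lt₀ (by linarith)

lemma le_modular_of_le_luxNorm (hT : 0 ≤ T) (hG : IsGFun G) (hv : MemLG T G v)
    (h2v : IntegrableOn (fun t => G ((2 : ℝ) • v t)) (Icc (-T) T)) {c : ℝ} (hc : 1 ≤ c)
    (h : c ≤ luxNorm T G v) : c ≤ modular T G v := by
  by_contra! hm
  rcases le_or_gt 1 (modular T G v) with h1 | h1
  · linarith [luxNorm_le_of_modular_le hT hG hv h1 le_rfl]
  · linarith [luxNorm_lt_one_of_modular_lt_one hT hG hv h2v h1]

lemma lt_modular_of_lt_luxNorm (hT : 0 ≤ T) (hG : IsGFun G) (hv : MemLG T G v) {c : ℝ}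
    (hc : 1 ≤ c) (h : c < luxNorm T G v) : c < modular T G v :=
  (lt_max_iff.1 <| h.trans_le <|
    luxNorm_le_of_modular_le hT hG hv (le_max_left _ _) (le_max_right _ _)).resolve_left hc.not_gt

end Orlicz

section Sobolev

variable {N : ℕ} {G : EuclideanSpace ℝ (Fin N) → ℝ} {T : ℝ} {u u' : ℝ → EuclideanSpace ℝ (Fin N)}

lemma MemW.memLG (hu : MemW T G u u') : MemLG T G u := hu.2.2.1

lemma MemW.memLG_deriv (hu : MemW T G u u') : MemLG T G u' := hu.2.2.2.1

lemma MemW.continuousOn (hT : 0 ≤ T) (hu : MemW T G u u') : ContinuousOn u (Icc (-T) T) := by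
  have hI : uIcc (-T) T = Icc (-T) T := uIcc_of_le (by linarith)
  have hprim := intervalIntegral.continuousOn_primitive_interval (μ := volume) (a := -T) (b := T)
    (hI ▸ hu.2.1)
  exact (continuousOn_const.add (hI ▸ hprim)).congr hu.1

lemma min_mul_half_le_modular_add (hT : 0 ≤ T) (hG : IsGFun G) (hu : MemW T G u u') {ρ k : ℝ}
    (hρ : 2 ≤ ρ) (hk : 0 ≤ k) (hW : WNorm T G u u' = ρ) :
    min 1 k * (ρ / 2) ≤ modular T G u' + k * modular T G u := by
  have hm := modular_nonneg hT hG u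
  have hm' := modular_nonneg hT hG u'
  rcases le_or_gt (ρ / 2) (luxNorm T G u) with hL | hL
  · have h2u : IntegrableOn (fun t => G ((2 : ℝ) • u t)) (Icc (-T) T) :=
      ContinuousOn.integrableOn_Icc (f := fun t => G ((2 : ℝ) • u t))
        (hG.continuous.comp_continuousOn fun t ht => (hu.continuousOn hT t ht).const_smul (2 : ℝ))
    have := le_modular_of_le_luxNorm hT hG hu.memLG h2u (by linarith) hL
    nlinarith [min_le_right 1 k]
  · have := lt_modular_of_lt_luxNorm hT hG hu.memLG_deriv (c := ρ / 2) (by linarith)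
      (by unfold WNorm at hW; linarith)
    nlinarith [min_le_left 1 k]

lemma modular_add_sub_le_integral_action (hT : 0 ≤ T) (hG : IsGFun G)
    {V : ℝ → EuclideanSpace ℝ (Fin N) → ℝ}
    (hVc : ContinuousOn (fun p : ℝ × EuclideanSpace ℝ (Fin N) => V p.1 p.2)
      (Icc (-T) T ×ˢ univ))
    {a : ℝ → ℝ} (ha : IntegrableOn a (Icc (-T) T)) {f : ℝ → EuclideanSpace ℝ (Fin N)}
    (hfm : AEStronglyMeasurable f (volume.restrict (Icc (-T) T)))
    (hf : IntegrableOn (fun t => fenchel G (f t)) (Icc (-T) T)) (hu : MemW T G u u') {b : ℝ}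
    (hV : ∀ t ∈ Icc (-T) T, b * G (u t) - a t ≤ V t (u t)) :
    modular T G u' + (b - 1) * modular T G u - (∫ t in (-T)..T, a t)
        - ∫ t in (-T)..T, fenchel G (f t)
      ≤ ∫ t in (-T)..T, (G (u' t) + V t (u t) + ⟪f t, u t⟫) := by
  have hTT : -T ≤ T := by linarith
  have iu' := hu.memLG_deriv.2.intervalIntegrable_of_le hTT
  have iu := IntegrableOn.intervalIntegrable_of_le hTT (hu.memLG.2.const_mul (b - 1))
  have ia := ha.intervalIntegrable_of_le hTT
  have iF := hf.intervalIntegrable_of_le hTT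
  have iV : IntervalIntegrable (fun t => V t (u t)) volume (-T) T :=
    (hVc.comp (continuousOn_id.prodMk (hu.continuousOn hT))
      fun t ht => mk_mem_prod ht (mem_univ _)).intervalIntegrable_of_Icc hTT
  have iinner : IntervalIntegrable (fun t => ⟪f t, u t⟫) volume (-T) T :=
    IntegrableOn.intervalIntegrable_of_le hTT <| (hf.add hu.memLG.2).mono' (hfm.inner hu.memLG.1)
      (ae_of_all _ fun t => (Real.norm_eq_abs _).trans_le (hG.abs_inner_le_fenchel_add (u t) (f t)))
  calc modular T G u' + (b - 1) * modular T G u - (∫ t in (-T)..T, a t)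
        - ∫ t in (-T)..T, fenchel G (f t)
      = ∫ t in (-T)..T, (G (u' t) + ((b - 1) * G (u t) - a t - fenchel G (f t))) := by
        rw [intervalIntegral.integral_add iu' ((iu.sub ia).sub iF),
          intervalIntegral.integral_sub (iu.sub ia) iF, intervalIntegral.integral_sub iu ia,
          intervalIntegral.integral_const_mul]
        simp only [modular]
        ring
    _ ≤ ∫ t in (-T)..T, (G (u' t) + V t (u t) + ⟪f t, u t⟫) :=
        intervalIntegral.integral_mono_on hTT (iu'.add ((iu.sub ia).sub iF))
          ((iu'.add iV).add iinner) fun t ht => by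
            linarith [hV t ht, (abs_le.1 (hG.abs_inner_le_fenchel_add (u t) (f t))).1]

end Sobolev

theorem mountain_pass_geometry_rho_ge_two_general {N : ℕ} (T : ℝ) (hT : 0 < T)
    (G : EuclideanSpace ℝ (Fin N) → ℝ) (hG : IsGFun G)
    (V : ℝ → EuclideanSpace ℝ (Fin N) → ℝ)
    (hVc : ContinuousOn (fun p : ℝ × EuclideanSpace ℝ (Fin N) => V p.1 p.2)
      (Set.Icc (-T) T ×ˢ Set.univ))
    (a : ℝ → ℝ) (ha : IntegrableOn a (Set.Icc (-T) T)) (b : ℝ) (hb : 1 < b)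
    (ρ₀ : ℝ)
    (hA3 : ∀ t ∈ Set.Icc (-T) T, ∀ x : EuclideanSpace ℝ (Fin N),
      ‖x‖ ≤ ρ₀ → b * G x - a t ≤ V t x)
    (f : ℝ → EuclideanSpace ℝ (Fin N))
    (hfm : AEStronglyMeasurable f (volume.restrict (Set.Icc (-T) T)))
    (hf : IntegrableOn (fun t => fenchel G (f t)) (Set.Icc (-T) T))
    (Cinf : ℝ) (hCinf : 0 < Cinf)
    (hemb : ∀ u u' : ℝ → EuclideanSpace ℝ (Fin N), MemW T G u u' →
      ∀ t ∈ Set.Icc (-T) T, ‖u t‖ ≤ Cinf * WNorm T G u u')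
    (ρ : ℝ) (hρ : ρ = ρ₀ / Cinf) (hρ2 : 2 ≤ ρ)
    (hsmall : (∫ t in (-T)..T, fenchel G (f t)) + ∫ t in (-T)..T, a t
        < min 1 (b - 1) * (ρ / 2)) :
    ∃ α > (0 : ℝ), ∀ u u' : ℝ → EuclideanSpace ℝ (Fin N), MemW T G u u' →
      WNorm T G u u' = ρ →
      α ≤ ∫ t in (-T)..T, (G (u' t) + V t (u t) + ⟪f t, u t⟫) := by
  refine ⟨min 1 (b - 1) * (ρ / 2) - ((∫ t in (-T)..T, fenchel G (f t)) + ∫ t in (-T)..T, a t),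
    by linarith, fun u u' hu hW => ?_⟩
  have hbound : ∀ t ∈ Icc (-T) T, ‖u t‖ ≤ ρ₀ := fun t ht => by
    simpa [hW, hρ, mul_div_cancel₀ _ hCinf.ne'] using hemb u u' hu t ht
  have hsphere := min_mul_half_le_modular_add hT.le hG hu (k := b - 1) hρ2 (by linarith) hW
  have haction := modular_add_sub_le_integral_action hT.le hG hVc ha hfm hf hu
    fun t ht => hA3 t ht _ (hbound t ht)
  linarith

/-- Lemma 3.3 of the paper (case of Theorem 1.2): the action functional is
bounded below by a positive constant on the sphere of radius ρ ≥ 2. -/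
theorem mountain_pass_geometry_rho_ge_two {N : ℕ} (T : ℝ) (hT : 0 < T)
    (G : EuclideanSpace ℝ (Fin N) → ℝ) (hG : IsGFun G)
    (V : ℝ → EuclideanSpace ℝ (Fin N) → ℝ)
    (hVc : ContinuousOn (fun p : ℝ × EuclideanSpace ℝ (Fin N) => V p.1 p.2)
      (Set.Icc (-T) T ×ˢ Set.univ))
    (a : ℝ → ℝ) (ha : IntegrableOn a (Set.Icc (-T) T)) (b : ℝ) (hb : 1 < b)
    (ρ₀ : ℝ) (hρ₀ : 0 < ρ₀)
    (hA3 : ∀ t ∈ Set.Icc (-T) T, ∀ x : EuclideanSpace ℝ (Fin N),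
      ‖x‖ ≤ ρ₀ → b * G x - a t ≤ V t x)
    (f : ℝ → EuclideanSpace ℝ (Fin N))
    (hfm : AEStronglyMeasurable f (volume.restrict (Set.Icc (-T) T)))
    (hf : IntegrableOn (fun t => fenchel G (f t)) (Set.Icc (-T) T))
    (Cinf : ℝ) (hCinf : 0 < Cinf)
    (hemb : ∀ u u' : ℝ → EuclideanSpace ℝ (Fin N), MemW T G u u' →
      ∀ t ∈ Set.Icc (-T) T, ‖u t‖ ≤ Cinf * WNorm T G u u')
    (ρ : ℝ) (hρ : ρ = ρ₀ / Cinf) (hρ2 : 2 ≤ ρ)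
    (hsmall : (∫ t in (-T)..T, fenchel G (f t)) + ∫ t in (-T)..T, a t
        < min 1 (b - 1) * (ρ / 2)) :
    ∃ α > (0 : ℝ), ∀ u u' : ℝ → EuclideanSpace ℝ (Fin N), MemW T G u u' →
      WNorm T G u u' = ρ →
      α ≤ ∫ t in (-T)..T, (G (u' t) + V t (u t) + ⟪f t, u t⟫) :=
  mountain_pass_geometry_rho_ge_two_general T hT G hG V hVc a ha b hb ρ₀ hA3 f hfm hf Cinf hCinf
    hemb ρ hρ hρ2 hsmall
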